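/- arXiv:2310.12079 — 2 statements merged into one kernel-verified Lean document; each statement's English description precedes it below -/
import Mathlib

section
/- Define, for ρ ∈ [-1,1] with q = √(1-ρ²): K₁(ρ) = (q + ρ·arccos(-ρ))/(2π), K₂(ρ) = (3ρq + arccos(-ρ)(1+2ρ²))/(2π), K₃₁(ρ) = (q(2+ρ²) + 3ρ·arccos(-ρ))/(2π), and σ_r²(ρ) = 2·[ K₁(ρ)²·(4K₂(ρ) + 6) − 8·K₁(ρ)·K₃₁(ρ) + 2·K₂(ρ) ]. Then σ_r²(1) = 0 and lim_{ρ → 1⁻} σ_r²(ρ) / (1-ρ)² = 8. -/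
open Real Filter

/-- Cho–Saul ReLU kernel `K₁(ρ) = (q + ρ arccos(-ρ))/(2π)`, `q = √(1-ρ²)`. -/
noncomputable def K1 (ρ : ℝ) : ℝ :=
  (Real.sqrt (1 - ρ ^ 2) + ρ * Real.arccos (-ρ)) / (2 * π)

/-- Cho–Saul ReLU kernel `K₂(ρ) = (3ρq + arccos(-ρ)(1+2ρ²))/(2π)`. -/
noncomputable def K2 (ρ : ℝ) : ℝ :=
  (3 * ρ * Real.sqrt (1 - ρ ^ 2) + Real.arccos (-ρ) * (1 + 2 * ρ ^ 2)) / (2 * π)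

/-- Mixed Cho–Saul ReLU kernel `K₃₁(ρ) = (q(2+ρ²) + 3ρ arccos(-ρ))/(2π)`. -/
noncomputable def K31 (ρ : ℝ) : ℝ :=
  (Real.sqrt (1 - ρ ^ 2) * (2 + ρ ^ 2) + 3 * ρ * Real.arccos (-ρ)) / (2 * π)

/-- Fluctuation variance `σ_r²(ρ) = 2[K₁²(4K₂ + 6) − 8K₁K₃₁ + 2K₂]` of the
correlation Markov chain of a He-initialized unshaped ReLU MLP. -/
noncomputable def sigmar2 (ρ : ℝ) : ℝ :=
  2 * (K1 ρ ^ 2 * (4 * K2 ρ + 6) - 8 * K1 ρ * K31 ρ + 2 * K2 ρ)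

/-!
Substitute `ρ = cos t` with `t ∈ [0, π]`, so that `√(1 - ρ²) = sin t` and `arccos (-ρ) = π - t`.
Each kernel then splits into its `π`-part `ρ / 2`, `(1 + 2ρ²) / 2`, `3ρ / 2` plus `1 / (2π)` times
a trigonometric correction of size `O(t³)`, `O(t⁵)`, `O(t⁵)` respectively; the corrections vanish
at `t = 0` and are bounded by integrating bounds on their derivatives. At the `π`-parts, `σ_r²`
equals `2(1 - ρ²)² = 2(1 - ρ)²(1 + ρ)²`, and the corrections change it by `O(t⁵)`: the `K₁`
correction is only `O(t³)`, but its first-order coefficient carries the factor `1 - ρ² = sin² t`.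
Since `1 - cos t ≥ 2t²/π²`, this is `o((1 - ρ)²)`, so `σ_r²(ρ)/(1 - ρ)² → 2 · 2² = 8`.
-/

open Set Topology

lemma abs_le_of_abs_deriv_le_mul_pow {f f' : ℝ → ℝ} {C : ℝ} {n : ℕ}
    (hf : ∀ x, HasDerivAt f (f' x) x) (hf0 : f 0 = 0)
    (hf' : ∀ x, 0 ≤ x → |f' x| ≤ C * x ^ n) {x : ℝ} (hx : 0 ≤ x) :
    |f x| ≤ C / (n + 1) * x ^ (n + 1) := by
  have hB (y : ℝ) : HasDerivAt (fun y => C / (n + 1) * y ^ (n + 1)) (C * y ^ n) y :=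
    ((hasDerivAt_pow (n + 1) y).const_mul (C / (n + 1))).congr_deriv (by
      rw [Nat.add_sub_cancel]; push_cast; field_simp)
  exact image_norm_le_of_norm_deriv_right_le_deriv_boundary (a := 0) (b := x)
    (fun y _ => (hf y).continuousAt.continuousWithinAt) (fun y _ => (hf y).hasDerivWithinAt)
    (by simp [hf0]) hB (fun y hy => hf' y hy.1) ⟨hx, le_rfl⟩

lemma abs_sin_sub_mul_cos_le {t : ℝ} (ht : 0 ≤ t) : |sin t - t * cos t| ≤ t ^ 3 / 3 := by
  have hd (x : ℝ) : HasDerivAt (fun x => sin x - x * cos x) (x * sin x) x :=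
    ((hasDerivAt_sin x).sub ((hasDerivAt_id' x).mul (hasDerivAt_cos x))).congr_deriv (by ring)
  refine (abs_le_of_abs_deriv_le_mul_pow (C := 1) (n := 2) hd (by simp) (fun x hx => by
    rw [abs_mul, abs_of_nonneg hx, one_mul, sq]
    exact mul_le_mul_of_nonneg_left (abs_sin_le_abs.trans_eq (abs_of_nonneg hx)) hx) ht).trans_eq
      (by push_cast; ring)

lemma abs_sub_cos_mul_sin_le {t : ℝ} (ht : 0 ≤ t) : |t - cos t * sin t| ≤ 2 * t ^ 3 / 3 := by
  have hd (x : ℝ) : HasDerivAt (fun x => x - cos x * sin x) (2 * sin x ^ 2) x :=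
    ((hasDerivAt_id' x).sub ((hasDerivAt_cos x).mul (hasDerivAt_sin x))).congr_deriv (by
      linear_combination (-1 : ℝ) * sin_sq_add_cos_sq x)
  refine (abs_le_of_abs_deriv_le_mul_pow (C := 2) (n := 2) hd (by simp) (fun x hx => by
    rw [abs_of_nonneg (by positivity)]
    linarith [sin_sq_le_sq (x := x)]) ht).trans_eq (by push_cast; ring)

lemma abs_three_mul_cos_mul_sin_sub_le {t : ℝ} (ht : 0 ≤ t) :
    |3 * cos t * sin t - t * (1 + 2 * cos t ^ 2)| ≤ 4 * t ^ 5 / 15 := by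
  have hd (x : ℝ) : HasDerivAt (fun x => 3 * cos x * sin x - x * (1 + 2 * cos x ^ 2))
      (-4 * sin x * (sin x - x * cos x)) x :=
    (((hasDerivAt_cos x).const_mul 3).mul (hasDerivAt_sin x)).sub
      ((hasDerivAt_id' x).mul ((((hasDerivAt_cos x).pow 2).const_mul 2).const_add 1))
      |>.congr_deriv (by norm_num; linear_combination sin_sq_add_cos_sq x)
  refine (abs_le_of_abs_deriv_le_mul_pow (C := 4 / 3) (n := 4) hd (by simp) (fun x hx => by
    rw [abs_mul, abs_mul]
    calc |-4| * |sin x| * |sin x - x * cos x| ≤ 4 * x * (x ^ 3 / 3) := by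
          gcongr
          · norm_num
          · exact abs_sin_le_abs.trans_eq (abs_of_nonneg hx)
          · exact abs_sin_sub_mul_cos_le hx
      _ = 4 / 3 * x ^ 4 := by ring) ht).trans_eq (by push_cast; ring)

lemma abs_sin_mul_two_add_cos_sq_sub_le {t : ℝ} (ht : 0 ≤ t) :
    |sin t * (2 + cos t ^ 2) - 3 * t * cos t| ≤ 2 * t ^ 5 / 5 := by
  have hd (x : ℝ) : HasDerivAt (fun x => sin x * (2 + cos x ^ 2) - 3 * x * cos x)
      (3 * sin x * (x - cos x * sin x)) x :=
    ((hasDerivAt_sin x).mul (((hasDerivAt_cos x).pow 2).const_add 2)).sub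
      (((hasDerivAt_id' x).const_mul 3).mul (hasDerivAt_cos x))
      |>.congr_deriv (by norm_num; linear_combination cos x * sin_sq_add_cos_sq x)
  refine (abs_le_of_abs_deriv_le_mul_pow (C := 2) (n := 4) hd (by simp) (fun x hx => by
    rw [abs_mul, abs_mul]
    calc |3| * |sin x| * |x - cos x * sin x| ≤ 3 * x * (2 * x ^ 3 / 3) := by
          gcongr
          · norm_num
          · exact abs_sin_le_abs.trans_eq (abs_of_nonneg hx)
          · exact abs_sub_cos_mul_sin_le hx
      _ = 2 * x ^ 4 := by ring) ht).trans_eq (by push_cast; ring)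

def sigmar2Remainder (c x y z : ℝ) : ℝ :=
  -4 * c * (1 - c ^ 2) * x + 4 * (2 + c ^ 2) * x ^ 2 + 4 * y * x * (c + x) + (2 + c ^ 2) * y
    - 4 * c * z - 8 * x * z

lemma abs_sigmar2Remainder_le {c x y z t : ℝ} (ht0 : 0 ≤ t) (ht1 : t ≤ 1) (hc : |c| ≤ 1)
    (hc2 : |1 - c ^ 2| ≤ t ^ 2) (hx : |x| ≤ t ^ 3) (hy : |y| ≤ t ^ 5) (hz : |z| ≤ t ^ 5) :
    |sigmar2Remainder c x y z| ≤ 39 * t ^ 5 := by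
  have hx1 : |x| ≤ 1 := hx.trans (pow_le_one₀ ht0 ht1)
  have ht6 : t ^ 6 ≤ t ^ 5 := pow_le_pow_of_le_one ht0 ht1 (by norm_num)
  have ht8 : t ^ 8 ≤ t ^ 5 := pow_le_pow_of_le_one ht0 ht1 (by norm_num)
  have hcc : |2 + c ^ 2| ≤ 3 := by
    rw [abs_of_pos (by positivity)]; linarith [(sq_le_one_iff_abs_le_one c).2 hc]
  have hcx : |c + x| ≤ 2 := (abs_add_le c x).trans (by linarith)
  have h1 : |c * (1 - c ^ 2) * x| ≤ t ^ 5 := by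
    simp only [abs_mul]
    calc |c| * |1 - c ^ 2| * |x| ≤ 1 * t ^ 2 * t ^ 3 := by gcongr
      _ = t ^ 5 := by ring
  have h2 : |(2 + c ^ 2) * x ^ 2| ≤ 3 * t ^ 5 := by
    rw [abs_mul, abs_pow]
    calc |2 + c ^ 2| * |x| ^ 2 ≤ 3 * (t ^ 3) ^ 2 := by gcongr
      _ ≤ 3 * t ^ 5 := by linarith [show (t ^ 3) ^ 2 = t ^ 6 by ring]
  have h3 : |y * x * (c + x)| ≤ 2 * t ^ 5 := by
    simp only [abs_mul]
    calc |y| * |x| * |c + x| ≤ t ^ 5 * 1 * 2 := by gcongr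
      _ = 2 * t ^ 5 := by ring
  have h4 : |(2 + c ^ 2) * y| ≤ 3 * t ^ 5 := by
    rw [abs_mul]; gcongr
  have h5 : |c * z| ≤ t ^ 5 := by
    rw [abs_mul]; simpa using mul_le_mul hc hz (abs_nonneg _) zero_le_one
  have h6 : |x * z| ≤ t ^ 5 := by
    rw [abs_mul]
    calc |x| * |z| ≤ t ^ 3 * t ^ 5 := by gcongr
      _ ≤ t ^ 5 := by linarith [show t ^ 3 * t ^ 5 = t ^ 8 by ring]
  rw [sigmar2Remainder, abs_le]
  constructor <;>
    linarith [abs_le.1 h1, abs_le.1 h2, abs_le.1 h3, abs_le.1 h4, abs_le.1 h5, abs_le.1 h6]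

lemma sigmar2_eq_add_remainder (ρ : ℝ) :
    sigmar2 ρ = 2 * (1 - ρ ^ 2) ^ 2 + 2 * sigmar2Remainder ρ (K1 ρ - ρ / 2)
      (K2 ρ - (1 + 2 * ρ ^ 2) / 2) (K31 ρ - 3 * ρ / 2) := by
  rw [sigmar2, sigmar2Remainder]; ring

section cos

variable {t : ℝ}

lemma K1_cos (h0 : 0 ≤ t) (hπ : t ≤ π) :
    K1 (cos t) = cos t / 2 + (sin t - t * cos t) / (2 * π) := by
  rw [K1, ← sin_eq_sqrt_one_sub_cos_sq h0 hπ, arccos_neg, arccos_cos h0 hπ]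
  field_simp; ring

lemma K2_cos (h0 : 0 ≤ t) (hπ : t ≤ π) :
    K2 (cos t) = (1 + 2 * cos t ^ 2) / 2
      + (3 * cos t * sin t - t * (1 + 2 * cos t ^ 2)) / (2 * π) := by
  rw [K2, ← sin_eq_sqrt_one_sub_cos_sq h0 hπ, arccos_neg, arccos_cos h0 hπ]
  field_simp; ring

lemma K31_cos (h0 : 0 ≤ t) (hπ : t ≤ π) :
    K31 (cos t) = 3 * cos t / 2 + (sin t * (2 + cos t ^ 2) - 3 * t * cos t) / (2 * π) := by
  rw [K31, ← sin_eq_sqrt_one_sub_cos_sq h0 hπ, arccos_neg, arccos_cos h0 hπ]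
  field_simp; ring

end cos

lemma abs_div_two_pi_le_abs (a : ℝ) : |a / (2 * π)| ≤ |a| := by
  rw [abs_div, abs_of_pos two_pi_pos]
  exact div_le_self (abs_nonneg a) (by linarith [pi_gt_three])

lemma abs_sigmar2_cos_sub_le {t : ℝ} (h0 : 0 ≤ t) (h1 : t ≤ 1) :
    |sigmar2 (cos t) - 2 * sin t ^ 4| ≤ 78 * t ^ 5 := by
  have hπ : t ≤ π := h1.trans (by linarith [pi_gt_three])
  have hx : |K1 (cos t) - cos t / 2| ≤ t ^ 3 := by
    rw [K1_cos h0 hπ, add_sub_cancel_left]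
    linarith [abs_div_two_pi_le_abs (sin t - t * cos t), abs_sin_sub_mul_cos_le h0,
      pow_nonneg h0 3]
  have hy : |K2 (cos t) - (1 + 2 * cos t ^ 2) / 2| ≤ t ^ 5 := by
    rw [K2_cos h0 hπ, add_sub_cancel_left]
    linarith [abs_div_two_pi_le_abs (3 * cos t * sin t - t * (1 + 2 * cos t ^ 2)),
      abs_three_mul_cos_mul_sin_sub_le h0, pow_nonneg h0 5]
  have hz : |K31 (cos t) - 3 * cos t / 2| ≤ t ^ 5 := by
    rw [K31_cos h0 hπ, add_sub_cancel_left]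
    linarith [abs_div_two_pi_le_abs (sin t * (2 + cos t ^ 2) - 3 * t * cos t),
      abs_sin_mul_two_add_cos_sq_sub_le h0, pow_nonneg h0 5]
  have hs : |1 - cos t ^ 2| ≤ t ^ 2 := by
    rw [← sin_sq, abs_of_nonneg (sq_nonneg _)]; exact sin_sq_le_sq
  rw [sigmar2_eq_add_remainder, ← sin_sq, ← pow_mul, add_sub_cancel_left, abs_mul, abs_two]
  linarith [abs_sigmar2Remainder_le h0 h1 (abs_cos_le_one t) hs hx hy hz]

lemma sigmar2_one : sigmar2 1 = 0 := by
  simp only [sigmar2, K1, K2, K31, arccos_neg_one]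
  field_simp
  ring

lemma tendsto_sigmar2_cos_sub_div :
    Tendsto (fun t => (sigmar2 (cos t) - 2 * sin t ^ 4) / (1 - cos t) ^ 2) (𝓝[>] 0) (𝓝 0) := by
  have hlin : Tendsto (fun t : ℝ => 39 * π ^ 4 / 2 * t) (𝓝[>] 0) (𝓝 0) := by
    have := ((continuous_const_mul (39 * π ^ 4 / 2)).tendsto 0).mono_left
      (nhdsWithin_le_nhds (s := Ioi 0))
    rwa [mul_zero] at this
  refine squeeze_zero_norm' ?_ hlin
  filter_upwards [Ioc_mem_nhdsGT zero_lt_one] with t ⟨h0, h1⟩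
  have hcos : 2 / π ^ 2 * t ^ 2 ≤ 1 - cos t := by
    linarith [cos_le_one_sub_mul_cos_sq (x := t) (by rw [abs_of_pos h0]; linarith [pi_gt_three])]
  have hpos : 0 < 2 / π ^ 2 * t ^ 2 := mul_pos (by positivity) (pow_pos h0 2)
  rw [norm_div, norm_pow, Real.norm_eq_abs, Real.norm_eq_abs, abs_of_pos (hpos.trans_le hcos),
    div_le_iff₀ (pow_pos (hpos.trans_le hcos) 2)]
  calc |sigmar2 (cos t) - 2 * sin t ^ 4| ≤ 78 * t ^ 5 := abs_sigmar2_cos_sub_le h0.le h1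
    _ = 39 * π ^ 4 / 2 * t * (2 / π ^ 2 * t ^ 2) ^ 2 := by field_simp; ring
    _ ≤ 39 * π ^ 4 / 2 * t * (1 - cos t) ^ 2 := by gcongr

lemma tendsto_sigmar2_cos_div :
    Tendsto (fun t => sigmar2 (cos t) / (1 - cos t) ^ 2) (𝓝[>] 0) (𝓝 8) := by
  have hmain : Tendsto (fun t => 2 * (1 + cos t) ^ 2) (𝓝[>] 0) (𝓝 8) := by
    have hc : Continuous fun t => 2 * (1 + cos t) ^ 2 := by fun_prop
    have := (hc.tendsto 0).mono_left (nhdsWithin_le_nhds (s := Ioi 0))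
    norm_num at this; exact this
  have hsum := hmain.add tendsto_sigmar2_cos_sub_div
  rw [add_zero] at hsum
  refine hsum.congr' ?_
  filter_upwards [Ioo_mem_nhdsGT pi_pos] with t ⟨h0, hπ⟩
  have hcos : 1 - cos t ≠ 0 := sub_ne_zero.2 fun h => h0.ne'
    ((cos_eq_one_iff_of_lt_of_lt (by linarith) (by linarith)).1 h.symm)
  rw [show sin t ^ 4 = (1 - cos t) ^ 2 * (1 + cos t) ^ 2 by
    rw [show sin t ^ 4 = (sin t ^ 2) ^ 2 by ring, sin_sq]; ring]
  field_simp
  ring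

lemma tendsto_arccos_nhdsLT_one : Tendsto arccos (𝓝[<] 1) (𝓝[>] 0) := by
  refine tendsto_nhdsWithin_iff.2 ⟨?_, ?_⟩
  · simpa [arccos_one] using (continuous_arccos.tendsto 1).mono_left nhdsWithin_le_nhds
  · filter_upwards [self_mem_nhdsWithin] with ρ hρ using arccos_pos.2 hρ

/-- `σ_r²(1) = 0` and `σ_r²(ρ)/(1-ρ)² → 8` as `ρ → 1⁻`. -/
theorem sigmar2_expansion_leading :
    sigmar2 1 = 0 ∧
    Tendsto (fun ρ : ℝ => sigmar2 ρ / (1 - ρ) ^ 2) (nhdsWithin 1 (Set.Iio 1))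
      (nhds 8) := by
  refine ⟨sigmar2_one, (tendsto_sigmar2_cos_div.comp tendsto_arccos_nhdsLT_one).congr' ?_⟩
  filter_upwards [Ioo_mem_nhdsLT (show (-1 : ℝ) < 1 by norm_num)] with ρ ⟨hρ₁, hρ₂⟩
  rw [Function.comp_apply, cos_arccos hρ₁.le hρ₂.le]
end

section
/- Define, for ρ ∈ [-1,1] with q = √(1-ρ²): K₁(ρ) = (q + ρ·arccos(-ρ))/(2π), K₂(ρ) = (3ρq + arccos(-ρ)(1+2ρ²))/(2π), K₃₁(ρ) = (q(2+ρ²) + 3ρ·arccos(-ρ))/(2π), and σ_r²(ρ) = 2·[ K₁(ρ)²·(4K₂(ρ) + 6) − 8·K₁(ρ)·K₃₁(ρ) + 2·K₂(ρ) ]. Then lim_{ρ → 1⁻} ( σ_r²(ρ) − 8(1-ρ)² ) / (1-ρ)^{5/2} = −224√2 / (15π). -/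
open Real Filter

/-- Taylor remainder of `sin` at order 5. -/
noncomputable def SR (x : ℝ) : ℝ := sin x - (x - x^3/6 + x^5/120)

/-- Taylor remainder of `cos` at order 4. -/
noncomputable def CR (x : ℝ) : ℝ := cos x - (1 - x^2/2 + x^4/24)

noncomputable def QQ (x : ℝ) : ℝ := - (56/15)*π^2 + (2/3)*x*π - 1*x*π^3 + (173/60)*x^2*π^2 - (16/15)*x^3*π + (3/8)*x^3*π^3 - (2633/2880)*x^4*π^2 + (62/135)*x^5*π - (1/16)*x^5*π^3 - (4/135)*x^6 + (149/960)*x^6*π^2 - (2021/21600)*x^7*π + (5/864)*x^7*π^3 + (31/2700)*x^8 - (43/2880)*x^8*π^2 + (41/4050)*x^9*π - (1/3456)*x^9*π^3 - (1087/648000)*x^10 + (53/69120)*x^10*π^2 - (97/172800)*x^11*π + (1/165888)*x^11*π^3 + (71/648000)*x^12 - (1/61440)*x^12*π^2 + (13/1036800)*x^13*π - (7/2592000)*x^14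

noncomputable def AA (x : ℝ) : ℝ := 3*(SR x)^2 + 3*(SR x)^2*(CR x) + 8*π*(SR x)*(CR x) + 4*π*(SR x)*(CR x)^2 - 3*π^2 + 3*π^2*(CR x) + 9*π^2*(CR x)^2 + 3*π^2*(CR x)^3 - 7*x*(SR x)*(CR x) - 8*x*(SR x)*(CR x)^2 - 4*x*π*(CR x) - 22*x*π*(CR x)^2 - 10*x*π*(CR x)^3 + 5*x^2*(CR x)^2 + 7*x^2*(CR x)^3 - (3/2)*x^2*(SR x)^2 - 4*x^2*π*(SR x) - 4*x^2*π*(SR x)*(CR x) - (3/2)*x^2*π^2 - 9*x^2*π^2*(CR x) - (9/2)*x^2*π^2*(CR x)^2 + 2*x^3*(SR x) + (13/2)*x^3*(SR x)*(CR x) + 2*x^3*π + (58/3)*x^3*π*(CR x) + (41/3)*x^3*π*(CR x)^2 - (8/3)*x^4*(CR x) - (47/6)*x^4*(CR x)^2 + (1/8)*x^4*(SR x)^2 + (4/3)*x^4*π*(SR x) + (1/3)*x^4*π*(SR x)*(CR x) + (19/8)*x^4*π^2 + 3*x^4*π^2*(CR x) + (3/8)*x^4*π^2*(CR x)^2 -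 (22/15)*x^5*(SR x) - (71/120)*x^5*(SR x)*(CR x) - (13/3)*x^5*π - (118/15)*x^5*π*(CR x) - (71/60)*x^5*π*(CR x)^2 + (1/3)*x^6 + (47/15)*x^6*(CR x) + (89/120)*x^6*(CR x)^2 - (1/6)*x^6*π*(SR x) - (3/4)*x^6*π^2 - (3/8)*x^6*π^2*(CR x) + (7/30)*x^7*(SR x) + (149/90)*x^7*π + (193/180)*x^7*π*(CR x) - (37/90)*x^8 - (49/90)*x^8*(CR x) + (1/144)*x^8*π*(SR x) + (7/64)*x^8*π^2 + (1/64)*x^8*π^2*(CR x) - (31/2880)*x^9*(SR x) - (131/480)*x^9*π - (67/1440)*x^9*π*(CR x) + (61/600)*x^10 + (187/7200)*x^10*(CR x) - (1/128)*x^10*π^2 + (181/8640)*x^11*π - (203/21600)*x^12 + (1/4608)*x^12*π^2 - (7/11520)*x^13*π + (13/43200)*x^14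

noncomputable def BB (x : ℝ) : ℝ := 8*π^3*(CR x)^2 + 2*π^3*(CR x)^3 + 1*x*π^2 - 16*x*π^2*(CR x) - 21*x*π^2*(CR x)^2 - 6*x*π^2*(CR x)^3 + 4*x^2*π*(CR x) + 14*x^2*π*(CR x)^2 + 6*x^2*π*(CR x)^3 - 12*x^2*π^3*(CR x) - 4*x^2*π^3*(CR x)^2 - 1*x^3*(CR x)^2 - 2*x^3*(CR x)^3 + (31/2)*x^3*π^2 + 30*x^3*π^2*(CR x) + (23/2)*x^3*π^2*(CR x)^2 - (10/3)*x^4*π - (52/3)*x^4*π*(CR x) - (31/3)*x^4*π*(CR x)^2 + 6*x^4*π^3 + 4*x^4*π^3*(CR x) + (1/3)*x^4*π^3*(CR x)^2 + (2/3)*x^5*(CR x) + (17/6)*x^5*(CR x)^2 - (1867/120)*x^5*π^2 - (54/5)*x^5*π^2*(CR x) - (39/40)*x^5*π^2*(CR x)^2 + (331/45)*x^6*π + (368/45)*x^6*π*(CR x) + (11/12)*x^6*π*(CR x)^2 - 2*x^6*π^3 - (1/2)*x^6*π^3*(CR x) - (1/9)*x^7 - (14/9)*x^7*(CR x) - (11/40)*x^7*(CR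 x)^2 + (101/20)*x^7*π^2 + (7/5)*x^7*π^2*(CR x) - (283/90)*x^8*π - (53/45)*x^8*π*(CR x) + (7/24)*x^8*π^3 + (1/48)*x^8*π^3*(CR x) + (11/30)*x^9 + (13/45)*x^9*(CR x) - (247/320)*x^9*π^2 - (19/320)*x^9*π^2*(CR x) + (12047/21600)*x^10*π + (377/7200)*x^10*π*(CR x) - (1/48)*x^10*π^3 - (547/5400)*x^11 - (203/14400)*x^11*(CR x) + (109/1920)*x^11*π^2 - (1927/43200)*x^12*π + (1/1728)*x^12*π^3 + (211/21600)*x^13 - (37/23040)*x^13*π^2 + (229/172800)*x^14*π - (23/72000)*x^15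


/-- The numerator after the substitution `ρ = cos x`. -/
noncomputable def Ncos (x : ℝ) : ℝ := sigmar2 (cos x) - 8 * (1 - cos x)^2

lemma contQQ : Continuous QQ := by unfold QQ; fun_prop
lemma contAA : Continuous AA := by unfold AA SR CR; fun_prop
lemma contBB : Continuous BB := by unfold BB CR; fun_prop

lemma partial_sum_eval (x : ℝ) :
    (∑ m ∈ Finset.range 6, ((x : ℂ) * Complex.I) ^ m / m.factorial) =
      Complex.mk (1 - x^2/2 + x^4/24) (x - x^3/6 + x^5/120) := by
  simp [Finset.sum_range_succ, Nat.factorial, Complex.ext_iff, pow_succ,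
    Complex.add_re, Complex.add_im, Complex.div_re, Complex.div_im,
    Complex.mul_re, Complex.mul_im, Complex.normSq]
  constructor <;> ring

lemma abs_SR_le {x : ℝ} (hx : |x| ≤ 1) : |SR x| ≤ |x|^6 := by
  have h1 : ‖(x : ℂ) * Complex.I‖ ≤ 1 := by simpa using hx
  have h := Complex.exp_bound h1 (n := 6) (by norm_num)
  rw [partial_sum_eval] at h
  have him : |(Complex.exp ((x : ℂ) * Complex.I) -
      Complex.mk (1 - x^2/2 + x^4/24) (x - x^3/6 + x^5/120)).im| ≤
      ‖Complex.exp ((x : ℂ) * Complex.I) -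
      Complex.mk (1 - x^2/2 + x^4/24) (x - x^3/6 + x^5/120)‖ :=
    Complex.abs_im_le_norm _
  have heq : (Complex.exp ((x : ℂ) * Complex.I) -
      Complex.mk (1 - x^2/2 + x^4/24) (x - x^3/6 + x^5/120)).im = SR x := by
    simp [Complex.sub_im, Complex.exp_ofReal_mul_I_im, SR]
  rw [heq] at him
  have h2 : ‖(x:ℂ)*Complex.I‖ = |x| := by simp
  rw [h2] at h
  calc |SR x| ≤ _ := him
    _ ≤ |x|^6 * ((7:ℝ) * ((720:ℝ) * 6)⁻¹) := by convert h using 2 <;> norm_num [Nat.factorial]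
    _ ≤ |x|^6 * 1 := mul_le_mul_of_nonneg_left (by norm_num) (by positivity)
    _ = |x|^6 := mul_one _

lemma abs_CR_le {x : ℝ} (hx : |x| ≤ 1) : |CR x| ≤ |x|^6 := by
  have h1 : ‖(x : ℂ) * Complex.I‖ ≤ 1 := by simpa using hx
  have h := Complex.exp_bound h1 (n := 6) (by norm_num)
  rw [partial_sum_eval] at h
  have him : |(Complex.exp ((x : ℂ) * Complex.I) -
      Complex.mk (1 - x^2/2 + x^4/24) (x - x^3/6 + x^5/120)).re| ≤
      ‖Complex.exp ((x : ℂ) * Complex.I) -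
      Complex.mk (1 - x^2/2 + x^4/24) (x - x^3/6 + x^5/120)‖ :=
    Complex.abs_re_le_norm _
  have heq : (Complex.exp ((x : ℂ) * Complex.I) -
      Complex.mk (1 - x^2/2 + x^4/24) (x - x^3/6 + x^5/120)).re = CR x := by
    simp [Complex.sub_re, Complex.exp_ofReal_mul_I_re, CR]
  rw [heq] at him
  have h2 : ‖(x:ℂ)*Complex.I‖ = |x| := by simp
  rw [h2] at h
  calc |CR x| ≤ _ := him
    _ ≤ |x|^6 * ((7:ℝ) * ((720:ℝ) * 6)⁻¹) := by convert h using 2 <;> norm_num [Nat.factorial]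
    _ ≤ |x|^6 * 1 := mul_le_mul_of_nonneg_left (by norm_num) (by positivity)
    _ = |x|^6 := mul_one _

lemma tendsto_SR_div : Tendsto (fun x : ℝ => SR x / x^5) (nhdsWithin 0 (Set.Ioi 0)) (nhds 0) := by
  apply squeeze_zero_norm' (a := fun x : ℝ => x)
  · filter_upwards [Ioo_mem_nhdsGT_of_mem (by norm_num : (0:ℝ) ∈ Set.Ico 0 1)] with x hx
    have hx0 : 0 < x := hx.1
    have hx1 : |x| ≤ 1 := by rw [abs_of_pos hx0]; exact hx.2.le
    have hb := abs_SR_le hx1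
    rw [abs_of_pos hx0] at hb
    rw [Real.norm_eq_abs, abs_div, abs_pow, abs_of_pos hx0, div_le_iff₀ (by positivity)]
    calc |SR x| ≤ x^6 := hb
      _ = x * x^5 := by ring
  · exact tendsto_id.mono_left nhdsWithin_le_nhds

lemma tendsto_CR_div : Tendsto (fun x : ℝ => CR x / x^5) (nhdsWithin 0 (Set.Ioi 0)) (nhds 0) := by
  apply squeeze_zero_norm' (a := fun x : ℝ => x)
  · filter_upwards [Ioo_mem_nhdsGT_of_mem (by norm_num : (0:ℝ) ∈ Set.Ico 0 1)] with x hx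
    have hx0 : 0 < x := hx.1
    have hx1 : |x| ≤ 1 := by rw [abs_of_pos hx0]; exact hx.2.le
    have hb := abs_CR_le hx1
    rw [abs_of_pos hx0] at hb
    rw [Real.norm_eq_abs, abs_div, abs_pow, abs_of_pos hx0, div_le_iff₀ (by positivity)]
    calc |CR x| ≤ x^6 := hb
      _ = x * x^5 := by ring
  · exact tendsto_id.mono_left nhdsWithin_le_nhds

lemma tendsto_sinc : Tendsto (fun x : ℝ => x / sin (x/2)) (nhdsWithin 0 (Set.Ioi 0)) (nhds 2) := by
  have hsin : Tendsto (fun y : ℝ => sin y / y) (nhdsWithin 0 {0}ᶜ) (nhds 1) := by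
    have h := Real.hasDerivAt_sin 0
    rw [hasDerivAt_iff_tendsto_slope] at h
    simp only [Real.cos_zero] at h
    refine h.congr (fun y => ?_)
    simp [slope_fun_def, Real.sin_zero]
    ring
  have hhalf : Tendsto (fun x : ℝ => x/2) (nhdsWithin 0 (Set.Ioi 0)) (nhdsWithin 0 {0}ᶜ) := by
    apply tendsto_nhdsWithin_of_tendsto_nhds_of_eventually_within
    · have h0 : Tendsto (fun x : ℝ => x/2) (nhds 0) (nhds (0/2)) := tendsto_id.div_const 2
      simpa using h0.mono_left nhdsWithin_le_nhds
    · filter_upwards [self_mem_nhdsWithin] with x hx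
      have hx0 : (0:ℝ) < x := hx
      simp only [Set.mem_compl_iff, Set.mem_singleton_iff]
      exact ne_of_gt (by positivity)
  have hcomp : Tendsto (fun x : ℝ => sin (x/2) / (x/2)) (nhdsWithin 0 (Set.Ioi 0)) (nhds 1) :=
    hsin.comp hhalf
  have h2 : Tendsto (fun x : ℝ => 2 / (sin (x/2) / (x/2))) (nhdsWithin 0 (Set.Ioi 0)) (nhds 2) := by
    have := (tendsto_const_nhds (x := (2:ℝ)) (f := nhdsWithin (0:ℝ) (Set.Ioi 0))).div hcomp one_ne_zero
    rw [div_one] at this; exact this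
  refine h2.congr' ?_
  filter_upwards [Ioo_mem_nhdsGT_of_mem (by norm_num : (0:ℝ) ∈ Set.Ico 0 1)] with x hx
  have hx0 : (0:ℝ) < x := hx.1
  have hx2 : x < 1 := hx.2
  rw [div_div_eq_mul_div, show 2 * (x/2) = x by ring]

set_option maxHeartbeats 2000000 in
lemma Ncos_eq {x : ℝ} (h1 : 0 < x) (h2 : x < π) :
    Ncos x = (x^5 * QQ x + SR x * AA x + CR x * BB x) / π^3 := by
  have hsq : Real.sqrt (1 - cos x ^ 2) = sin x := by
    rw [← Real.sin_sq, Real.sqrt_sq (Real.sin_nonneg_of_nonneg_of_le_pi h1.le h2.le)]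
  have hac : Real.arccos (-cos x) = π - x := by
    rw [Real.arccos_neg, Real.arccos_cos h1.le h2.le]
  rw [eq_div_iff (by positivity : (π:ℝ)^3 ≠ 0)]
  unfold Ncos sigmar2 K1 K2 K31
  rw [hsq, hac]
  unfold QQ AA BB SR CR
  have hpi : (π:ℝ) ≠ 0 := Real.pi_ne_zero
  field_simp
  ring

lemma QQ_zero : QQ 0 = -(56/15) * π^2 := by unfold QQ; norm_num

lemma tendsto_Ncos_div :
    Tendsto (fun x : ℝ => Ncos x / x^5) (nhdsWithin 0 (Set.Ioi 0)) (nhds (-56/(15*π))) := by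
  have hpi : (π:ℝ) ≠ 0 := Real.pi_ne_zero
  have hQ : Tendsto (fun x : ℝ => QQ x / π^3) (nhdsWithin 0 (Set.Ioi 0)) (nhds (QQ 0 / π^3)) :=
    ((contQQ.tendsto 0).div_const _).mono_left nhdsWithin_le_nhds
  have hA : Tendsto (fun x : ℝ => AA x / π^3) (nhdsWithin 0 (Set.Ioi 0)) (nhds (AA 0 / π^3)) :=
    ((contAA.tendsto 0).div_const _).mono_left nhdsWithin_le_nhds
  have hB : Tendsto (fun x : ℝ => BB x / π^3) (nhdsWithin 0 (Set.Ioi 0)) (nhds (BB 0 / π^3)) :=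
    ((contBB.tendsto 0).div_const _).mono_left nhdsWithin_le_nhds
  have hmain := hQ.add ((tendsto_SR_div.mul hA).add (tendsto_CR_div.mul hB))
  simp only [zero_mul, add_zero] at hmain
  have hval : QQ 0 / π^3 = -56/(15*π) := by
    rw [QQ_zero]; field_simp
  rw [hval] at hmain
  refine hmain.congr' ?_
  filter_upwards [Ioo_mem_nhdsGT_of_mem (by norm_num : (0:ℝ) ∈ Set.Ico 0 1)] with x hx
  have hx0 : (0:ℝ) < x := hx.1
  have hxpi : x < π := lt_trans hx.2 (by linarith [Real.pi_gt_three])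
  rw [Ncos_eq hx0 hxpi]
  have hxne : x ≠ 0 := ne_of_gt hx0
  field_simp
  ring

lemma sqrt_two_pow_five : (Real.sqrt 2)^5 = 4 * Real.sqrt 2 := by
  have h : (Real.sqrt 2)^2 = 2 := Real.sq_sqrt (by norm_num)
  calc (Real.sqrt 2)^5 = ((Real.sqrt 2)^2)^2 * Real.sqrt 2 := by ring
    _ = 4 * Real.sqrt 2 := by rw [h]; norm_num

lemma tendsto_H :
    Tendsto (fun x : ℝ => Ncos x / (1 - cos x) ^ ((5:ℝ)/2)) (nhdsWithin 0 (Set.Ioi 0))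
      (nhds (-224 * Real.sqrt 2 / (15 * π))) := by
  have hmain := (tendsto_Ncos_div.mul (tendsto_sinc.pow 5)).div_const (4 * Real.sqrt 2)
  have hval : -56/(15*π) * 2^5 / (4 * Real.sqrt 2) = -224 * Real.sqrt 2 / (15 * π) := by
    have h2 : Real.sqrt 2 * Real.sqrt 2 = 2 := Real.mul_self_sqrt (by norm_num)
    have hs : Real.sqrt 2 ≠ 0 := by positivity
    have hpi : (π:ℝ) ≠ 0 := Real.pi_ne_zero
    field_simp
    linear_combination 896 * h2
  rw [hval] at hmain
  refine hmain.congr' ?_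
  filter_upwards [Ioo_mem_nhdsGT_of_mem (by norm_num : (0:ℝ) ∈ Set.Ico 0 1)] with x hx
  have hx0 : (0:ℝ) < x := hx.1
  have hx2 : x < 1 := hx.2
  have hxpi : x < π := lt_trans hx2 (by linarith [Real.pi_gt_three])
  have hs0 : 0 < sin (x/2) := Real.sin_pos_of_pos_of_lt_pi (by linarith)
    (by linarith [Real.pi_gt_three])
  have h1c : 1 - cos x = 2 * sin (x/2)^2 := by
    have h := Real.sin_sq_eq_half_sub (x/2)
    rw [show 2*(x/2) = x by ring] at h
    linarith
  have hrw : (1 - cos x) ^ ((5:ℝ)/2) = (Real.sqrt 2 * sin (x/2))^5 := by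
    have ha : (0:ℝ) ≤ Real.sqrt 2 * sin (x/2) := by positivity
    have ha2 : (Real.sqrt 2 * sin (x/2))^2 = 2 * sin (x/2)^2 := by
      rw [mul_pow, Real.sq_sqrt (by norm_num : (0:ℝ) ≤ 2)]
    rw [h1c, ← ha2, ← Real.rpow_natCast (Real.sqrt 2 * sin (x/2)) 2, ← Real.rpow_mul ha,
      show ((2:ℕ):ℝ) * ((5:ℝ)/2) = ((5:ℕ):ℝ) by norm_num, Real.rpow_natCast]
  rw [hrw, mul_pow, sqrt_two_pow_five]
  have hxne : x ≠ 0 := ne_of_gt hx0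
  have hsne : sin (x/2) ≠ 0 := ne_of_gt hs0
  have hs2 : Real.sqrt 2 ≠ 0 := by positivity
  field_simp

/-- `(σ_r²(ρ) − 8(1-ρ)²)/(1-ρ)^{5/2} → −224√2/(15π)` as `ρ → 1⁻`. -/
theorem sigmar2_expansion_second_order :
    Tendsto
      (fun ρ : ℝ => (sigmar2 ρ - 8 * (1 - ρ) ^ 2) / (1 - ρ) ^ ((5 : ℝ) / 2))
      (nhdsWithin 1 (Set.Iio 1))
      (nhds (-224 * Real.sqrt 2 / (15 * π))) := by
  have harc : Tendsto Real.arccos (nhdsWithin 1 (Set.Iio 1)) (nhdsWithin 0 (Set.Ioi 0)) := by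
    apply tendsto_nhdsWithin_of_tendsto_nhds_of_eventually_within
    · have h : Tendsto Real.arccos (nhds 1) (nhds (Real.arccos 1)) :=
        Real.continuous_arccos.tendsto 1
      rw [Real.arccos_one] at h
      exact h.mono_left nhdsWithin_le_nhds
    · filter_upwards [self_mem_nhdsWithin] with ρ hρ
      exact Real.arccos_pos.mpr hρ
  have hcomp := tendsto_H.comp harc
  refine Tendsto.congr' ?_ hcomp
  filter_upwards [Ioo_mem_nhdsLT_of_mem (by norm_num : (1:ℝ) ∈ Set.Ioc 0 1)] with ρ hρ
  have hc : cos (Real.arccos ρ) = ρ := Real.cos_arccos (by linarith [hρ.1]) hρ.2.le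
  simp only [Function.comp_apply]
  unfold Ncos
  rw [hc]
end
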